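/- Let A be a nonzero commutative radical complex Banach algebra and let A_e be its unitization with the norm ‖a + λe‖₁ = ‖a‖ + |λ|. Then there exists a normalized state f on A_e which is not a spectral state, i.e., there exist f ∈ D(A_e, e) and x ∈ A_e with f(x) ∉ co(sp(x)). (This disproves the claim that every normalized state on a unital complex Banach algebra is a spectral state.) -/

import Mathlib

open Unitization WithLp

/-- The element `a` of `A`, viewed as the element `a + 0·e` of the unitization
`A_e = WithLp 1 (Unitization ℂ A)` equipped with the norm `‖a + λe‖₁ = ‖a‖ + |λ|`. -/
noncomputable def inrL1 {A : Type*} [NonUnitalNormedRing A] [NormedSpace ℂ A] (a : A) :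
    WithLp 1 (Unitization ℂ A) :=
  (WithLp.equiv 1 (Unitization ℂ A)).symm (Unitization.inr a)

/-- The functional `φ∞ : a + λ·e ↦ λ` on the ℓ¹-unitization, as a continuous linear map. -/
noncomputable def phiInf (A : Type*) [NonUnitalNormedRing A] [NormedSpace ℂ A]
    [IsScalarTower ℂ A A] [SMulCommClass ℂ A A] :
    WithLp 1 (Unitization ℂ A) →L[ℂ] ℂ :=
  LinearMap.mkContinuous
    ((Unitization.fstHom ℂ A).toLinearMap ∘ₗ (WithLp.linearEquiv 1 ℂ (Unitization ℂ A)).toLinearMap)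
    1
    (fun x => by
      rw [one_mul, WithLp.unitization_norm_def]
      simpa using le_add_of_nonneg_right (norm_nonneg _))

/-!
In `A_e`, the element `a ∈ A` has spectrum `{0}` because `A` is radical. On the other hand,
a norm-one functional `g` on `A` with `g a = ‖a‖` extends to `a + λe ↦ λ + g a`, which has norm
one for the ℓ¹-norm, takes the value `1` at `e`, and the value `‖a‖ ≠ 0` at `a`.
-/

theorem ContinuousLinearMap.norm_eq_one_of_map_one {𝕜 E : Type*} [NontriviallyNormedField 𝕜]
    [SeminormedRing E] [NormOneClass E] [NormedSpace 𝕜 E] (f : E →L[𝕜] 𝕜) (hf₁ : f 1 = 1)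
    (hf : ‖f‖ ≤ 1) : ‖f‖ = 1 := by
  refine le_antisymm hf ?_
  simpa [hf₁] using f.le_opNorm 1

namespace WithLp

variable {𝕜 A : Type*} [NontriviallyNormedField 𝕜] [NonUnitalNormedRing A] [NormedSpace 𝕜 A]
  [IsScalarTower 𝕜 A A] [SMulCommClass 𝕜 A A]

@[simp]
theorem unitization_ofLp_one : ofLp (1 : WithLp 1 (Unitization 𝕜 A)) = 1 :=
  rfl

instance : NormOneClass (WithLp 1 (Unitization 𝕜 A)) where
  norm_one := by simp [unitization_norm_def]

theorem spectrum_unitization_toLp_inr (a : A) :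
    spectrum 𝕜 (toLp 1 (a : Unitization 𝕜 A)) = quasispectrum 𝕜 a := by
  rw [Unitization.quasispectrum_eq_spectrum_inr 𝕜 a]
  exact AlgEquiv.spectrum_eq (unitizationAlgEquiv 𝕜).symm _

noncomputable def unitizationFunctional (g : A →L[𝕜] 𝕜) : WithLp 1 (Unitization 𝕜 A) →L[𝕜] 𝕜 :=
  LinearMap.mkContinuous
    { toFun x := (ofLp x).fst + g (ofLp x).snd
      map_add' x y := by simp only [ofLp_add, fst_add, snd_add, map_add]; ring
      map_smul' c x := by simp [mul_add] }
    (max 1 ‖g‖)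
    (fun x => by
      rw [unitization_norm_def, mul_add]
      refine (norm_add_le _ _).trans (add_le_add ?_ ?_)
      · exact le_mul_of_one_le_left (norm_nonneg _) (le_max_left _ _)
      · exact (g.le_opNorm _).trans (by gcongr; exact le_max_right _ _))

variable (g : A →L[𝕜] 𝕜)

@[simp]
theorem unitizationFunctional_apply (x : WithLp 1 (Unitization 𝕜 A)) :
    unitizationFunctional g x = (ofLp x).fst + g (ofLp x).snd :=
  rfl

theorem unitizationFunctional_toLp_inr (a : A) :
    unitizationFunctional g (toLp 1 (a : Unitization 𝕜 A)) = g a := by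
  simp

theorem unitizationFunctional_one : unitizationFunctional g 1 = 1 := by
  simp

theorem norm_unitizationFunctional_le (hg : ‖g‖ ≤ 1) : ‖unitizationFunctional g‖ ≤ 1 := by
  refine ContinuousLinearMap.opNorm_le_bound _ zero_le_one fun x => ?_
  rw [one_mul, unitization_norm_def, unitizationFunctional_apply]
  refine (norm_add_le _ _).trans (add_le_add_right ?_ _)
  exact (g.le_opNorm _).trans (mul_le_of_le_one_left (norm_nonneg _) hg)

end WithLp

theorem exists_state_not_spectral_state_general
    {A : Type*} [NonUnitalNormedCommRing A] [NormedSpace ℂ A]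
    [IsScalarTower ℂ A A] [SMulCommClass ℂ A A] [Nontrivial A]
    (hrad : ∀ a : A, quasispectrum ℂ a = {0}) :
    ∃ f : WithLp 1 (Unitization ℂ A) →L[ℂ] ℂ,
      (f 1 = 1 ∧ ‖f‖ = 1) ∧
        ∃ x : WithLp 1 (Unitization ℂ A), f x ∉ convexHull ℝ (spectrum ℂ x) := by
  obtain ⟨a, ha⟩ := exists_ne (0 : A)
  obtain ⟨g, hg, hga⟩ := exists_dual_vector ℂ a (norm_ne_zero_iff.mpr ha)
  have hf₁ := unitizationFunctional_one g
  refine ⟨unitizationFunctional g,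
    ⟨hf₁, (unitizationFunctional g).norm_eq_one_of_map_one hf₁
      (norm_unitizationFunctional_le g hg.le)⟩, toLp 1 (a : Unitization ℂ A), ?_⟩
  rw [spectrum_unitization_toLp_inr, hrad, convexHull_singleton,
    unitizationFunctional_toLp_inr, hga]
  simpa using ha

/-- If `A` is a nonzero commutative radical complex Banach algebra and `A_e` its unitization
with the norm `‖a + λe‖₁ = ‖a‖ + |λ|`, then there exists a normalized state `f` on `A_e`
(a continuous linear functional with `f(e) = ‖f‖ = 1`) which is not a spectral state:
there is an `x ∈ A_e` with `f(x) ∉ co(sp(x))`. -/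
theorem exists_state_not_spectral_state
    {A : Type*} [NonUnitalNormedCommRing A] [NormedSpace ℂ A]
    [IsScalarTower ℂ A A] [SMulCommClass ℂ A A] [CompleteSpace A] [Nontrivial A]
    (hrad : ∀ a : A, quasispectrum ℂ a = {0}) :
    ∃ f : WithLp 1 (Unitization ℂ A) →L[ℂ] ℂ,
      (f 1 = 1 ∧ ‖f‖ = 1) ∧
        ∃ x : WithLp 1 (Unitization ℂ A), f x ∉ convexHull ℝ (spectrum ℂ x) :=
  exists_state_not_spectral_state_general hrad
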